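/- Let X be a complete, doubling, uniformly perfect metric space and let E ⊆ X be an (α_n)-regular set. If (α_n) ∉ ℓ^∞ (i.e. Σ_n α_n^p = ∞ for every p > 0), then E is thin, i.e. μ(E) = 0 for every doubling measure μ on X. -/

import Mathlib

open MeasureTheory Metric Set Filter

/-- A measure is doubling with constant `C`:
`0 < μ(B(x,2r)) ≤ C·μ(B(x,r)) < ∞` for all `x` and `r > 0`. -/
def IsDoublingWith {X : Type*} [MetricSpace X] [MeasurableSpace X]
    (μ : Measure X) (C : NNReal) : Prop :=
  ∀ (x : X) (r : ℝ), 0 < r →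
    0 < μ (ball x (2 * r)) ∧ μ (ball x (2 * r)) ≤ (C : ENNReal) * μ (ball x r) ∧
      (C : ENNReal) * μ (ball x r) < ⊤

/-- A doubling measure: doubling with some constant `C ≥ 1`. -/
def IsDoublingMeasure {X : Type*} [MetricSpace X] [MeasurableSpace X]
    (μ : Measure X) : Prop :=
  ∃ C : NNReal, 1 ≤ C ∧ IsDoublingWith μ C

/-- A uniformly perfect metric space. -/
def UniformlyPerfect (X : Type*) [MetricSpace X] : Prop :=
  (∃ x y : X, x ≠ y) ∧
    ∃ D : ℝ, 1 ≤ D ∧ ∀ (x : X) (r : ℝ), 0 < r →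
      ((Set.univ : Set X) \ ball x r).Nonempty → (ball x r \ ball x (r / D)).Nonempty

/-- A (metrically) doubling space: there is `N` such that every ball of radius `r`
is covered by `N` balls of radius `r/2`. -/
def DoublingSpace (X : Type*) [MetricSpace X] : Prop :=
  ∃ N : ℕ, ∀ (x : X) (r : ℝ), 0 < r →
    ∃ s : Finset X, s.card ≤ N ∧ ball x r ⊆ ⋃ y ∈ s, ball y (r / 2)

/-- Ahlfors `q`-regularity of the measure `H` with constant `C`. -/
def AhlforsRegular {X : Type*} [MetricSpace X] [MeasurableSpace X]
    (H : Measure X) (q C : ℝ) : Prop :=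
  ∀ (x : X) (r : ℝ), 0 < r →
    ENNReal.ofReal (r ^ q / C) ≤ H (ball x r) ∧ H (ball x r) ≤ ENNReal.ofReal (C * r ^ q)

/-- An `(α n)`-regular structure on `X`: Borel "cubes" `Q n i` (for `i ∈ idx n`) with
centers `ctr n i`, radii `rad n i` and constants `d, C₁, C₂, C₃(·)` satisfying
conditions (I)-(V) of Ojala's definition of `(α n)`-regular sets. -/
structure RegularStructure (X : Type*) [MetricSpace X] [MeasurableSpace X]
    (α : ℕ → ℝ) where
  idx : ℕ → Set ℕ
  Q : ℕ → ℕ → Set X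
  ctr : ℕ → ℕ → X
  rad : ℕ → ℕ → ℝ
  d : ℝ
  C₁ : ℝ
  C₂ : ℝ
  C₃ : ℝ → ℝ
  d_pos : 0 < d
  d_le_one : d ≤ 1
  one_le_C₁ : 1 ≤ C₁
  one_le_C₂ : 1 ≤ C₂
  borel : ∀ n, ∀ i ∈ idx n, MeasurableSet (Q n i)
  rad_pos : ∀ n, ∀ i ∈ idx n, 0 < rad n i
  -- (I): each level partitions the space
  cover : ∀ (n : ℕ) (x : X), ∃ i ∈ idx n, x ∈ Q n i
  pairwise_disj : ∀ n, ∀ i ∈ idx n, ∀ j ∈ idx n, i ≠ j → Q n i ∩ Q n j = ∅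
  -- (II): nestedness
  nested : ∀ k m, m ≤ k → ∀ i ∈ idx k, ∀ j ∈ idx m, Q k i ∩ Q m j = ∅ ∨ Q k i ⊆ Q m j
  -- (III): cubes squeezed between balls
  ball_subset : ∀ n, ∀ i ∈ idx n, ball (ctr n i) (rad n i) ⊆ Q n i
  subset_ball : ∀ n, ∀ i ∈ idx n, Q n i ⊆ ball (ctr n i) (C₁ * rad n i)
  -- (IV): size of the child cube containing the center
  center_lower : ∀ n, ∀ i ∈ idx n, ∀ j ∈ idx (n + 1), ctr n i ∈ Q (n + 1) j →
    (1 / C₂) * α n ^ (1 / d) * rad n i ≤ rad (n + 1) j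
  center_upper : ∀ n, ∀ i ∈ idx n, ∀ j ∈ idx (n + 1), ctr n i ∈ Q (n + 1) j →
    rad (n + 1) j ≤ C₂ * α n ^ d * rad n i
  center_proper : ∀ n, ∀ i ∈ idx n, ∀ j ∈ idx (n + 1), ctr n i ∈ Q (n + 1) j →
    (Q n i \ Q (n + 1) j).Nonempty
  -- (V): comparability of radii of nearby cubes of the same level
  one_le_C₃ : ∀ T : ℝ, 1 < T → 1 ≤ C₃ T
  comparable : ∀ T : ℝ, 1 < T → ∀ n, ∀ i ∈ idx n, ∀ j ∈ idx n,
    (Q n i ∩ ball (ctr n j) (T * rad n j)).Nonempty →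
    (1 / C₃ T) * rad n j ≤ rad n i ∧ rad n i ≤ C₃ T * rad n j

namespace RegularStructure

variable {X : Type*} [MetricSpace X] [MeasurableSpace X] {α : ℕ → ℝ}

open scoped Classical

/-- `E_n`: the union over `i ∈ N_n` of `Q_{n,i} ∖ Q_{n+1,j(i)}` where `j(i)` is the
index of the `(n+1)`-cube containing the center `x_{n,i}`. -/
def level (S : RegularStructure X α) (n : ℕ) : Set X :=
  {x | ∃ i ∈ S.idx n, ∃ j ∈ S.idx (n + 1),
    S.ctr n i ∈ S.Q (n + 1) j ∧ x ∈ S.Q n i \ S.Q (n + 1) j}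

/-- The `(α n)`-regular set `E = ⋂ n, E_n` determined by the structure. -/
def limitSet (S : RegularStructure X α) : Set X := ⋂ n, S.level n

/-- `⋂_{i=1}^{n-1} E_i`. -/
def preLevel (S : RegularStructure X α) (n : ℕ) : Set X :=
  ⋂ i ∈ Finset.Icc 1 (n - 1), S.level i

/-- `𝔍_{n,j}`: the union of the `(n+1)`-cubes contained in `B(x_{n,j}, r_{n,j}/2)`. -/
def Jset (S : RegularStructure X α) (n j : ℕ) : Set X :=
  {x | ∃ i ∈ S.idx (n + 1),
    S.Q (n + 1) i ⊆ ball (S.ctr n j) (S.rad n j / 2) ∧ x ∈ S.Q (n + 1) i}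

/-- `IN(B(x,r),n)`: the union of the `n`-cubes contained in `B(x,r)`. -/
def INset (S : RegularStructure X α) (x : X) (r : ℝ) (n : ℕ) : Set X :=
  {y | ∃ j ∈ S.idx n, S.Q n j ⊆ ball x r ∧ y ∈ S.Q n j}

/-- `COV(B(x,r),n)`: the union of the `n`-cubes meeting `B(x,r)`. -/
def COVset (S : RegularStructure X α) (x : X) (r : ℝ) (n : ℕ) : Set X :=
  {y | ∃ j ∈ S.idx n, (S.Q n j ∩ ball x r).Nonempty ∧ y ∈ S.Q n j}

/-- The normalizing constant `A_{n,j} = H(𝔍_{n,j}) / ∫_{𝔍_{n,j}} d(x_{n,j},y)^ρ dH(y)`. -/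
noncomputable def Acoef (S : RegularStructure X α) (H : Measure X) (ρ : ℝ) (n j : ℕ) : ℝ :=
  (H (S.Jset n j)).toReal / ∫ y in S.Jset n j, dist (S.ctr n j) y ^ ρ ∂H

/-- The weight `y_n`: equal to `A_{n,j} d(x_{n,j},x)^ρ` on `𝔍_{n,j}` and `1` elsewhere. -/
noncomputable def weight (S : RegularStructure X α) (H : Measure X) (ρ : ℝ) (n : ℕ)
    (x : X) : ℝ :=
  if h : ∃ j ∈ S.idx n, x ∈ S.Jset n j then
    S.Acoef H ρ n h.choose * dist (S.ctr n h.choose) x ^ ρ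
  else 1

/-- The measure `θ_n` with `dθ_n = y_n dH`. -/
noncomputable def theta (S : RegularStructure X α) (H : Measure X) (ρ : ℝ) (n : ℕ) :
    Measure X :=
  H.withDensity fun x => ENNReal.ofReal (S.weight H ρ n x)

/-- The averaged weight `t_n`: on each `(n+1)`-cube `Q`, equal to `θ_n(Q)/H(Q)`. -/
noncomputable def avgWeight (S : RegularStructure X α) (H : Measure X) (ρ : ℝ) (n : ℕ)
    (x : X) : ℝ :=
  if h : ∃ i ∈ S.idx (n + 1), x ∈ S.Q (n + 1) i then
    (S.theta H ρ n (S.Q (n + 1) h.choose)).toReal / (H (S.Q (n + 1) h.choose)).toReal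
  else 1

/-- `K_n = ∏_{i=n₀}^{n} t_i`. -/
noncomputable def Kweight (S : RegularStructure X α) (H : Measure X) (ρ : ℝ)
    (n₀ n : ℕ) (x : X) : ℝ :=
  ∏ i ∈ Finset.Icc n₀ n, S.avgWeight H ρ i x

/-- The measure `ν_n` with `dν_n = K_n dH`. -/
noncomputable def nu (S : RegularStructure X α) (H : Measure X) (ρ : ℝ) (n₀ n : ℕ) :
    Measure X :=
  H.withDensity fun x => ENNReal.ofReal (S.Kweight H ρ n₀ n x)

/-- A level `n` is good if `B(x_{n,j}, r_{n,j}/16) ⊆ 𝔍_{n,j}` for all `j`, and balls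
`B(x,2r)` with `x ∈ Q_{n,j}`, `r ≤ r_{n,j}/(32 C₃(2C₁))` miss all `𝔍_{n,i}`, `i ≠ j`. -/
def GoodLevel (S : RegularStructure X α) (n : ℕ) : Prop :=
  (∀ j ∈ S.idx n, ball (S.ctr n j) (S.rad n j / 16) ⊆ S.Jset n j) ∧
  (∀ j ∈ S.idx n, ∀ x ∈ S.Q n j, ∀ r : ℝ, 0 < r →
    r ≤ S.rad n j / (32 * S.C₃ (2 * S.C₁)) →
    ∀ i ∈ S.idx n, i ≠ j → ball x (2 * r) ∩ S.Jset n i = ∅)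

/-- Relative plumpness of the `(α n)`-regular set determined by the structure. -/
def RelativelyPlump (S : RegularStructure X α) : Prop :=
  ∃ b : ℝ, 0 < b ∧ ∀ x ∈ S.limitSet, ∀ R : ℝ, 0 < R → ∀ n : ℕ,
    (∃ j ∈ S.idx n, S.Q n j ⊆ ball x R ∩ S.preLevel n) →
    (∀ m, m < n → ¬ ∃ j ∈ S.idx m, S.Q m j ⊆ ball x R ∩ S.preLevel m) →
    ∃ y ∈ S.preLevel n, ball y (b * R) ⊆ ball x R ∩ S.preLevel n

end RegularStructure

/-- `E ⊆ X` is an `(α n)`-regular set. -/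
def IsRegularSet {X : Type*} [MetricSpace X] [MeasurableSpace X]
    (α : ℕ → ℝ) (E : Set X) : Prop :=
  ∃ S : RegularStructure X α, E = S.limitSet



/-!
Let `x_{n,i}` be the center of an `n`-cube `Q_{n,i}` and `Q_{n+1,j}` the `(n+1)`-cube containing it.
By (III) and (IV), `Q_{n,i}` lies in a ball about `x_{n+1,j}` whose radius is `≲ α_n^{-1/d}` times
the radius of a ball inside `Q_{n+1,j}`, so iterating the doubling condition gives
`μ(Q_{n+1,j}) ≥ e_n μ(Q_{n,i})` with `e_n ≍ α_n^{s/d}`, `s = log₂ C`. Since `E ∩ Q_{n,i}` misses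
`Q_{n+1,j}` and `Q_{n,i} ∖ Q_{n+1,j}` is a union of `(n+1)`-cubes, induction over the levels gives
`μ(E ∩ Q_{0,i}) ≤ ∏_{m<k} (1 - e_m) μ(Q_{0,i})`, and this product tends to `0` because
`∑ α_n^{s/d} = ∞`.
-/

open scoped ENNReal NNReal Topology

lemma Real.rpow_logb_comm {b x y : ℝ} (hx : 0 < x) (hy : 0 < y) :
    x ^ Real.logb b y = y ^ Real.logb b x := by
  rw [Real.rpow_def_of_pos hx, Real.rpow_def_of_pos hy, Real.logb, Real.logb]
  ring_nf

lemma tendsto_prod_one_sub_of_not_summable {e : ℕ → ℝ} (h0 : ∀ n, 0 ≤ e n)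
    (h1 : ∀ n, e n ≤ 1) (he : ¬ Summable e) :
    Tendsto (fun k => ∏ m ∈ Finset.range k, (1 - e m)) atTop (𝓝 0) := by
  have hsum := (not_summable_iff_tendsto_nat_atTop_of_nonneg h0).mp he
  refine tendsto_of_tendsto_of_tendsto_of_le_of_le tendsto_const_nhds
    (Real.tendsto_exp_atBot.comp (tendsto_neg_atTop_atBot.comp hsum)) (fun k => ?_) fun k => ?_
  · exact Finset.prod_nonneg fun m _ => sub_nonneg.2 (h1 m)
  · calc ∏ m ∈ Finset.range k, (1 - e m) ≤ ∏ m ∈ Finset.range k, Real.exp (-e m) :=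
          Finset.prod_le_prod (fun m _ => sub_nonneg.2 (h1 m))
            fun m _ => by linarith [Real.add_one_le_exp (-e m)]
      _ = Real.exp (-∑ m ∈ Finset.range k, e m) := by
          rw [← Real.exp_sum, Finset.sum_neg_distrib]

lemma MeasureTheory.measure_sdiff_le_ofReal_one_sub_mul {X : Type*} [MeasurableSpace X]
    {μ : Measure X} {s t : Set X} {e : ℝ} (he : 0 ≤ e) (hts : t ⊆ s) (ht : MeasurableSet t)
    (hs : μ s ≠ ∞) (h : ENNReal.ofReal e * μ s ≤ μ t) :
    μ (s \ t) ≤ ENNReal.ofReal (1 - e) * μ s := by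
  rw [measure_sdiff hts ht.nullMeasurableSet (ne_top_of_le_ne_top hs (measure_mono hts)),
    ENNReal.ofReal_sub _ he, ENNReal.ofReal_one, ENNReal.sub_mul fun _ _ => hs, one_mul]
  exact tsub_le_tsub_left h _

namespace IsDoublingWith

variable {X : Type*} [MetricSpace X] [MeasurableSpace X] {μ : Measure X} {C : ℝ≥0}

lemma measure_ball_lt_top (h : IsDoublingWith μ C) (x : X) {r : ℝ} (hr : 0 < r) :
    μ (ball x r) < ∞ := by
  obtain ⟨hpos, hle, hlt⟩ := h x r hr
  refine ENNReal.lt_top_of_mul_ne_top_right hlt.ne fun hC => ?_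
  rw [hC, zero_mul] at hle
  exact hpos.ne' (le_antisymm hle zero_le)

lemma measure_ball_two_pow_mul_le (h : IsDoublingWith μ C) (k : ℕ) (x : X) {r : ℝ}
    (hr : 0 < r) : μ (ball x (2 ^ k * r)) ≤ C ^ k * μ (ball x r) := by
  induction k with
  | zero => simp
  | succ k ih =>
    calc μ (ball x (2 ^ (k + 1) * r)) = μ (ball x (2 * (2 ^ k * r))) := by ring_nf
      _ ≤ C * μ (ball x (2 ^ k * r)) := (h x _ (by positivity)).2.1
      _ ≤ C * (C ^ k * μ (ball x r)) := by gcongr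
      _ = C ^ (k + 1) * μ (ball x r) := by ring

lemma measure_ball_mul_le (h : IsDoublingWith μ C) (hC : 1 ≤ C) (x : X) {r t : ℝ}
    (hr : 0 < r) (ht : 1 ≤ t) :
    μ (ball x (t * r)) ≤ ENNReal.ofReal (C * t ^ Real.logb 2 C) * μ (ball x r) := by
  have hC' : (1 : ℝ) ≤ C := hC
  set k := ⌈Real.logb 2 t⌉₊
  have htk : t ≤ 2 ^ k :=
    calc t = 2 ^ Real.logb 2 t := (Real.rpow_logb two_pos (by norm_num) (by linarith)).symm
      _ ≤ 2 ^ (k : ℝ) := Real.rpow_le_rpow_of_exponent_le one_le_two (Nat.le_ceil _)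
      _ = 2 ^ k := Real.rpow_natCast _ _
  have hCk : (C : ℝ) ^ k ≤ C * t ^ Real.logb 2 C :=
    calc (C : ℝ) ^ k = (C : ℝ) ^ (k : ℝ) := (Real.rpow_natCast _ _).symm
      _ ≤ (C : ℝ) ^ (Real.logb 2 t + 1) := Real.rpow_le_rpow_of_exponent_le hC'
          (Nat.ceil_lt_add_one (Real.logb_nonneg one_lt_two ht)).le
      _ = C * t ^ Real.logb 2 C := by
          rw [Real.rpow_add (by linarith), Real.rpow_one,
            Real.rpow_logb_comm (by linarith) (by linarith), mul_comm]
  calc μ (ball x (t * r)) ≤ μ (ball x (2 ^ k * r)) := measure_mono (ball_subset_ball (by gcongr))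
    _ ≤ C ^ k * μ (ball x r) := h.measure_ball_two_pow_mul_le k x hr
    _ ≤ ENNReal.ofReal (C * t ^ Real.logb 2 C) * μ (ball x r) := by
        gcongr
        rw [← ENNReal.ofReal_coe_nnreal, ← ENNReal.ofReal_pow C.coe_nonneg]
        exact ENNReal.ofReal_le_ofReal hCk

end IsDoublingWith

namespace RegularStructure

variable {X : Type*} [MetricSpace X] [MeasurableSpace X] {α : ℕ → ℝ} (S : RegularStructure X α)

lemma ctr_mem_Q {n i : ℕ} (hi : i ∈ S.idx n) : S.ctr n i ∈ S.Q n i :=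
  S.ball_subset n i hi (mem_ball_self (S.rad_pos n i hi))

lemma eq_of_mem_Q {n i j : ℕ} {x : X} (hi : i ∈ S.idx n) (hj : j ∈ S.idx n)
    (hxi : x ∈ S.Q n i) (hxj : x ∈ S.Q n j) : i = j := by
  by_contra hij
  exact (Set.eq_empty_iff_forall_notMem.1 (S.pairwise_disj n i hi j hj hij)) x ⟨hxi, hxj⟩

lemma Q_subset_Q_of_mem {k m i j : ℕ} {x : X} (hmk : m ≤ k) (hi : i ∈ S.idx k)
    (hj : j ∈ S.idx m) (hxi : x ∈ S.Q k i) (hxj : x ∈ S.Q m j) : S.Q k i ⊆ S.Q m j :=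
  (S.nested k m hmk i hi j hj).resolve_left fun h =>
    (Set.eq_empty_iff_forall_notMem.1 h) x ⟨hxi, hxj⟩

lemma Q_inter_limitSet_subset {n i j : ℕ} (hi : i ∈ S.idx n) (hj : j ∈ S.idx (n + 1))
    (hc : S.ctr n i ∈ S.Q (n + 1) j) : S.Q n i ∩ S.limitSet ⊆ S.Q n i \ S.Q (n + 1) j := by
  rintro x ⟨hxi, hxE⟩
  obtain ⟨i', hi', j', hj', hc', hxi', hxj'⟩ := mem_iInter.1 hxE n
  obtain rfl := S.eq_of_mem_Q hi' hi hxi' hxi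
  obtain rfl := S.eq_of_mem_Q hj' hj hc' hc
  exact ⟨hxi, hxj'⟩

lemma exists_Q_succ_subset_diff {n i j : ℕ} {x : X} (hi : i ∈ S.idx n) (hj : j ∈ S.idx (n + 1))
    (hx : x ∈ S.Q n i \ S.Q (n + 1) j) :
    ∃ i' ∈ S.idx (n + 1), x ∈ S.Q (n + 1) i' ∧ S.Q (n + 1) i' ⊆ S.Q n i \ S.Q (n + 1) j := by
  obtain ⟨i', hi', hxi'⟩ := S.cover (n + 1) x
  refine ⟨i', hi', hxi', fun y hy => ⟨S.Q_subset_Q_of_mem n.le_succ hi' hi hxi' hx.1 hy, ?_⟩⟩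
  rintro hyj
  obtain rfl := S.eq_of_mem_Q hi' hj hy hyj
  exact hx.2 hxi'

lemma measure_le_mul_of_forall_Q {ν μ : Measure X} {a : ℝ≥0∞} {k : ℕ} {A : Set X}
    (hA : ∀ x ∈ A, ∃ i ∈ S.idx k, x ∈ S.Q k i ∧ S.Q k i ⊆ A)
    (h : ∀ i ∈ S.idx k, ν (S.Q k i) ≤ a * μ (S.Q k i)) : ν A ≤ a * μ A := by
  set T := {i | i ∈ S.idx k ∧ S.Q k i ⊆ A}
  have hAT : A = ⋃ i ∈ T, S.Q k i := by
    refine Subset.antisymm (fun x hx => ?_) (iUnion₂_subset fun i hi => hi.2)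
    obtain ⟨i, hi, hxi, hiA⟩ := hA x hx
    exact mem_biUnion ⟨hi, hiA⟩ hxi
  have hdisj : T.PairwiseDisjoint (S.Q k) := fun i hi j hj hij =>
    disjoint_iff_inter_eq_empty.2 (S.pairwise_disj k i hi.1 j hj.1 hij)
  rw [hAT, measure_biUnion (μ := μ) T.to_countable hdisj fun i hi => S.borel k i hi.1]
  calc ν (⋃ i ∈ T, S.Q k i) ≤ ∑' i : T, ν (S.Q k i) := measure_biUnion_le ν T.to_countable _
    _ ≤ ∑' i : T, a * μ (S.Q k i) := ENNReal.tsum_le_tsum fun i => h i i.2.1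
    _ = a * ∑' i : T, μ (S.Q k i) := ENNReal.tsum_mul_left

lemma Q_subset_ball_of_ctr_mem {n i j : ℕ} (hα₀ : 0 < α n) (hα₁ : α n ≤ 1)
    (hi : i ∈ S.idx n) (hj : j ∈ S.idx (n + 1)) (hc : S.ctr n i ∈ S.Q (n + 1) j) :
    S.Q n i ⊆ ball (S.ctr (n + 1) j) (S.C₁ * (S.C₂ + 1) / α n ^ (1 / S.d) * S.rad (n + 1) j) := by
  set a := α n ^ (1 / S.d)
  have ha₀ : 0 < a := Real.rpow_pos_of_pos hα₀ _
  have ha₁ : a ≤ 1 := Real.rpow_le_one hα₀.le hα₁ (by have := S.d_pos; positivity)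
  have hC₁ := S.one_le_C₁
  have hC₂ := S.one_le_C₂
  have hr' := S.rad_pos (n + 1) j hj
  have hr : a * S.rad n i ≤ S.C₂ * S.rad (n + 1) j := by
    have := S.center_lower n i hi j hj hc
    rw [one_div, mul_assoc, inv_mul_le_iff₀ (by linarith)] at this
    exact this
  intro y hy
  have hy₁ := mem_ball.1 (S.subset_ball n i hi hy)
  have hy₂ := mem_ball.1 (S.subset_ball (n + 1) j hj hc)
  rw [mem_ball, div_mul_eq_mul_div, lt_div_iff₀ ha₀]
  calc dist y (S.ctr (n + 1) j) * a
      ≤ (dist y (S.ctr n i) + dist (S.ctr n i) (S.ctr (n + 1) j)) * a := by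
        gcongr; exact dist_triangle _ _ _
    _ < (S.C₁ * S.rad n i + S.C₁ * S.rad (n + 1) j) * a := by gcongr
    _ = S.C₁ * (a * S.rad n i) + S.C₁ * S.rad (n + 1) j * a := by ring
    _ ≤ S.C₁ * (S.C₂ * S.rad (n + 1) j) + S.C₁ * S.rad (n + 1) j * 1 := by gcongr
    _ = S.C₁ * (S.C₂ + 1) * S.rad (n + 1) j := by ring

lemma measure_Q_lt_top {μ : Measure X} {C : ℝ≥0} (hμ : IsDoublingWith μ C) {n i : ℕ}
    (hi : i ∈ S.idx n) : μ (S.Q n i) < ∞ :=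
  (measure_mono (S.subset_ball n i hi)).trans_lt <|
    hμ.measure_ball_lt_top _ (mul_pos (by linarith [S.one_le_C₁]) (S.rad_pos n i hi))

lemma ofReal_mul_measure_Q_le {μ : Measure X} {C : ℝ≥0} (hμ : IsDoublingWith μ C) (hC : 1 ≤ C)
    {n i j : ℕ} (hα₀ : 0 < α n) (hα₁ : α n ≤ 1) (hi : i ∈ S.idx n) (hj : j ∈ S.idx (n + 1))
    (hc : S.ctr n i ∈ S.Q (n + 1) j) :
    ENNReal.ofReal ((C * (S.C₁ * (S.C₂ + 1)) ^ Real.logb 2 C)⁻¹ * α n ^ (Real.logb 2 C / S.d)) *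
      μ (S.Q n i) ≤ μ (S.Q (n + 1) j) := by
  set s := Real.logb 2 C
  set t := S.C₁ * (S.C₂ + 1) / α n ^ (1 / S.d)
  have hC' : (1 : ℝ) ≤ C := hC
  have hM : 1 ≤ S.C₁ * (S.C₂ + 1) := by nlinarith [S.one_le_C₁, S.one_le_C₂]
  have ha₀ : 0 < α n ^ (1 / S.d) := Real.rpow_pos_of_pos hα₀ _
  have ht : 1 ≤ t := by
    rw [le_div_iff₀ ha₀, one_mul]
    exact (Real.rpow_le_one hα₀.le hα₁ (by have := S.d_pos; positivity)).trans hM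
  have hL : 0 < C * t ^ s := by positivity
  have hinv : (C * (S.C₁ * (S.C₂ + 1)) ^ s)⁻¹ * α n ^ (s / S.d) = (C * t ^ s)⁻¹ := by
    rw [Real.div_rpow (by positivity) ha₀.le, ← Real.rpow_mul hα₀.le, one_div_mul_eq_div]
    field_simp
  have hQ : μ (S.Q n i) ≤ ENNReal.ofReal (C * t ^ s) * μ (S.Q (n + 1) j) :=
    calc μ (S.Q n i) ≤ μ (ball (S.ctr (n + 1) j) (t * S.rad (n + 1) j)) :=
          measure_mono (S.Q_subset_ball_of_ctr_mem hα₀ hα₁ hi hj hc)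
      _ ≤ ENNReal.ofReal (C * t ^ s) * μ (ball (S.ctr (n + 1) j) (S.rad (n + 1) j)) :=
          hμ.measure_ball_mul_le hC _ (S.rad_pos _ _ hj) ht
      _ ≤ ENNReal.ofReal (C * t ^ s) * μ (S.Q (n + 1) j) := by
          gcongr; exact S.ball_subset _ _ hj
  calc ENNReal.ofReal ((C * (S.C₁ * (S.C₂ + 1)) ^ s)⁻¹ * α n ^ (s / S.d)) * μ (S.Q n i)
      ≤ ENNReal.ofReal (C * t ^ s)⁻¹ * (ENNReal.ofReal (C * t ^ s) * μ (S.Q (n + 1) j)) := by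
        rw [hinv]; gcongr
    _ = μ (S.Q (n + 1) j) := by
        rw [← mul_assoc, ← ENNReal.ofReal_mul (by positivity), inv_mul_cancel₀ hL.ne',
          ENNReal.ofReal_one, one_mul]

lemma restrict_limitSet_Q_le {μ : Measure X} {e : ℕ → ℝ}
    (hfin : ∀ n, ∀ i ∈ S.idx n, μ (S.Q n i) < ∞) (he₀ : ∀ n, 0 ≤ e n)
    (hchild : ∀ n, ∀ i ∈ S.idx n, ∀ j ∈ S.idx (n + 1), S.ctr n i ∈ S.Q (n + 1) j →
      ENNReal.ofReal (e n) * μ (S.Q n i) ≤ μ (S.Q (n + 1) j))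
    (k n : ℕ) {i : ℕ} (hi : i ∈ S.idx n) :
    μ.restrict S.limitSet (S.Q n i) ≤
      (∏ m ∈ Finset.Ico n (n + k), ENNReal.ofReal (1 - e m)) * μ (S.Q n i) := by
  induction k generalizing n i with
  | zero => simpa using Measure.restrict_apply_le _ _
  | succ k ih =>
    obtain ⟨j, hj, hc⟩ := S.cover (n + 1) (S.ctr n i)
    have hsub := S.Q_subset_Q_of_mem n.le_succ hj hi hc (S.ctr_mem_Q hi)
    calc μ.restrict S.limitSet (S.Q n i) = μ (S.Q n i ∩ S.limitSet) :=
          Measure.restrict_apply (S.borel n i hi)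
      _ ≤ μ ((S.Q n i \ S.Q (n + 1) j) ∩ S.limitSet) :=
          measure_mono fun x hx => ⟨S.Q_inter_limitSet_subset hi hj hc hx, hx.2⟩
      _ ≤ μ.restrict S.limitSet (S.Q n i \ S.Q (n + 1) j) := Measure.le_restrict_apply _ _
      _ ≤ (∏ m ∈ Finset.Ico (n + 1) (n + 1 + k), ENNReal.ofReal (1 - e m)) *
            μ (S.Q n i \ S.Q (n + 1) j) :=
          S.measure_le_mul_of_forall_Q (fun x hx => S.exists_Q_succ_subset_diff hi hj hx)
            fun i' hi' => ih (n + 1) hi'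
      _ ≤ (∏ m ∈ Finset.Ico (n + 1) (n + 1 + k), ENNReal.ofReal (1 - e m)) *
            (ENNReal.ofReal (1 - e n) * μ (S.Q n i)) := by
          gcongr
          exact measure_sdiff_le_ofReal_one_sub_mul (he₀ n) hsub (S.borel _ _ hj)
            (hfin n i hi).ne (hchild n i hi j hj hc)
      _ = (∏ m ∈ Finset.Ico n (n + (k + 1)), ENNReal.ofReal (1 - e m)) * μ (S.Q n i) := by
          rw [Finset.prod_eq_prod_Ico_succ_bot (show n < n + (k + 1) by omega),
            show n + (k + 1) = n + 1 + k by ring]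
          ring

theorem measure_limitSet_eq_zero {μ : Measure X} {e : ℕ → ℝ}
    (hfin : ∀ n, ∀ i ∈ S.idx n, μ (S.Q n i) < ∞) (he₀ : ∀ n, 0 ≤ e n)
    (hchild : ∀ n, ∀ i ∈ S.idx n, ∀ j ∈ S.idx (n + 1), S.ctr n i ∈ S.Q (n + 1) j →
      ENNReal.ofReal (e n) * μ (S.Q n i) ≤ μ (S.Q (n + 1) j))
    (he₁ : ∀ n, e n ≤ 1) (he : ¬ Summable e) :
    μ S.limitSet = 0 := by
  have hzero : ∀ i ∈ S.idx 0, μ.restrict S.limitSet (S.Q 0 i) = 0 := by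
    intro i hi
    have hprod : Tendsto (fun k => ENNReal.ofReal (∏ m ∈ Finset.range k, (1 - e m)) *
        μ (S.Q 0 i)) atTop (𝓝 0) := by
      simpa using ENNReal.Tendsto.mul_const (ENNReal.tendsto_ofReal
        (tendsto_prod_one_sub_of_not_summable he₀ he₁ he)) (Or.inr (hfin 0 i hi).ne)
    refine le_antisymm (ge_of_tendsto' hprod fun k => ?_) zero_le
    rw [ENNReal.ofReal_prod_of_nonneg fun m _ => sub_nonneg.2 (he₁ m), Finset.range_eq_Ico]
    simpa using S.restrict_limitSet_Q_le hfin he₀ hchild k 0 hi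
  have huniv : μ.restrict S.limitSet univ ≤ 0 * μ univ :=
    S.measure_le_mul_of_forall_Q (k := 0)
      (fun x _ => (S.cover 0 x).imp fun i hi => ⟨hi.1, hi.2, subset_univ _⟩)
      fun i hi => by rw [hzero i hi, zero_mul]
  rw [← Measure.restrict_apply_univ]
  simpa using huniv

end RegularStructure

theorem regular_set_thin_of_not_ell_infty_general {X : Type*} [MetricSpace X] [MeasurableSpace X]
    (α : ℕ → ℝ) (hα : ∀ n, 0 < α n ∧ α n < 1)
    (E : Set X) (hE : IsRegularSet α E)
    (hsum : ∀ p : ℝ, 0 < p → ¬ Summable (fun n => α n ^ p)) :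
    ∀ μ : Measure X, IsDoublingMeasure μ → μ E = 0 := by
  obtain ⟨S, rfl⟩ := hE
  rintro μ ⟨C, hC, hμ⟩
  have hC' : (1 : ℝ) ≤ C := hC
  set s := Real.logb 2 C / S.d
  set c := (C * (S.C₁ * (S.C₂ + 1)) ^ Real.logb 2 C)⁻¹
  have hs : 0 ≤ s := div_nonneg (Real.logb_nonneg one_lt_two hC') S.d_pos.le
  have hc₀ : 0 < c := by have := S.one_le_C₁; have := S.one_le_C₂; positivity
  have hc₁ : c ≤ 1 := inv_le_one_of_one_le₀ (one_le_mul_of_one_le_of_one_le hC'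
    (Real.one_le_rpow (by nlinarith [S.one_le_C₁, S.one_le_C₂])
      (Real.logb_nonneg one_lt_two hC')))
  refine S.measure_limitSet_eq_zero (e := fun n => c * α n ^ s)
    (fun n i hi => S.measure_Q_lt_top hμ hi) (fun n => by have := (hα n).1; positivity)
    (fun n i hi j hj hc => S.ofReal_mul_measure_Q_le hμ hC (hα n).1 (hα n).2.le hi hj hc)
    (fun n => mul_le_one₀ hc₁ (by have := (hα n).1; positivity)
      (Real.rpow_le_one (hα n).1.le (hα n).2.le hs)) ?_
  rw [summable_mul_left_iff hc₀.ne']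
  -- `s = 0` when `C = 1`, so compare with the positive exponent `s + 1`
  exact fun h => hsum (s + 1) (by positivity) (h.of_nonneg_of_le (fun n => by
    have := (hα n).1; positivity)
    fun n => Real.rpow_le_rpow_of_exponent_ge (hα n).1 (hα n).2.le (by linarith))

/-- `(α n) ∉ ℓ^∞` implies `E` is thin. -/
theorem regular_set_thin_of_not_ell_infty {X : Type*} [MetricSpace X] [MeasurableSpace X]
    [BorelSpace X] [CompleteSpace X]
    (hX : DoublingSpace X) (hup : UniformlyPerfect X)
    (α : ℕ → ℝ) (hα : ∀ n, 0 < α n ∧ α n < 1)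
    (E : Set X) (hE : IsRegularSet α E)
    (hsum : ∀ p : ℝ, 0 < p → ¬ Summable (fun n => α n ^ p)) :
    ∀ μ : Measure X, IsDoublingMeasure μ → μ E = 0 :=
  regular_set_thin_of_not_ell_infty_general α hα E hE hsum
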